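/- arXiv:2304.00635 — 2 statements merged into one kernel-verified Lean document; each statement's English description precedes it below -/
import Mathlib

section
/- Let N ≥ 1 be an integer with canonical Ostrowski digits b_n, …, b_0 with respect to α. Then: b_n ≥ 1; b_0 ≤ a_1 − 1 (in particular b_0 = 0 if q_1 = 1); b_r ≤ a_{r+1} for every 1 ≤ r ≤ n; and if b_r = a_{r+1} for some 1 ≤ r ≤ n then b_{r-1} = 0. -/
open Finset

/-- Complete quotients of `α`: `a'₀ = α`, `a'_{n+1} = 1/(a'_n - ⌊a'_n⌋)`. -/
noncomputable def cq (α : ℝ) : ℕ → ℝ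
  | 0 => α
  | n + 1 => 1 / (cq α n - (⌊cq α n⌋ : ℝ))

/-- Partial quotients `a_n = ⌊a'_n⌋`. -/
noncomputable def aq (α : ℝ) (n : ℕ) : ℕ := (⌊cq α n⌋).toNat

/-- Quasiperiods: `q₋₂ = 1`, `q₋₁ = 0`, `q_n = a_n q_{n-1} + q_{n-2}` (so `q₀ = 1`, `q₁ = a₁`). -/
noncomputable def qp (α : ℝ) : ℕ → ℕ
  | 0 => 1
  | 1 => aq α 1
  | n + 2 => aq α (n + 2) * qp α (n + 1) + qp α n

/-- Error periods: `q'_n = a'_n q_{n-1} + q_{n-2}` (so `q'₀ = 1`, `q'₁ = a'₁`). -/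
noncomputable def qe (α : ℝ) : ℕ → ℝ
  | 0 => 1
  | 1 => cq α 1
  | n + 2 => cq α (n + 2) * (qp α (n + 1) : ℝ) + (qp α n : ℝ)

/-- Convergent numerators: `p₋₂ = 0`, `p₋₁ = 1`, `p_n = a_n p_{n-1} + p_{n-2}`
(so for `0 < α < 1`, `p₀ = 0`, `p₁ = 1`). -/
noncomputable def pn (α : ℝ) : ℕ → ℕ
  | 0 => 0
  | 1 => 1
  | n + 2 => aq α (n + 2) * pn α (n + 1) + pn α n

/-- `p'_n = a'_n p_{n-1} + p_{n-2}` (so for `0 < α < 1`, `p'₀ = α`, `p'₁ = 1`). -/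
noncomputable def pe (α : ℝ) : ℕ → ℝ
  | 0 => α
  | 1 => 1
  | n + 2 => cq α (n + 2) * (pn α (n + 1) : ℝ) + (pn α n : ℝ)

/-- `ostN α N = max {r : q_r ≤ N}` (quasiperiods satisfy `q_r ≥ r`, so the bound `N` suffices). -/
noncomputable def ostN (α : ℝ) (N : ℕ) : ℕ :=
  Nat.findGreatest (fun r => qp α r ≤ N) N

/-- The remainders of the greedy Ostrowski algorithm: `ostM α N k = M_{n-k}` where
`M_n = N` and `M_{r-1} = M_r % q_r`. -/
noncomputable def ostM (α : ℝ) (N : ℕ) : ℕ → ℕ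
  | 0 => N
  | k + 1 => ostM α N k % qp α (ostN α N - k)

/-- The canonical (greedy) Ostrowski digits: `b_r = ⌊M_r / q_r⌋`. -/
noncomputable def ostDigit (α : ℝ) (N r : ℕ) : ℕ :=
  ostM α N (ostN α N - r) / qp α r

section Aux
variable (α : ℝ)

lemma cq_irrat (hirr : Irrational α) : ∀ n, Irrational (cq α n)
  | 0 => hirr
  | n + 1 => by
    have ih := cq_irrat hirr n
    have h1 : Irrational (cq α n - (⌊cq α n⌋ : ℝ)) := ih.sub_intCast _
    simpa [cq, one_div] using h1.inv

lemma one_lt_cq (hirr : Irrational α) (n : ℕ) : 1 < cq α (n + 1) := by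
  have ih := cq_irrat α hirr n
  have hne : cq α n ≠ ((⌊cq α n⌋ : ℤ) : ℝ) := ih.ne_int _
  have hle := Int.floor_le (cq α n)
  have hf : (0:ℝ) < cq α n - (⌊cq α n⌋ : ℝ) := by
    rcases hle.lt_or_eq with h | h
    · linarith
    · exact absurd h.symm hne
  have hlt : cq α n - (⌊cq α n⌋ : ℝ) < 1 := by
    have := Int.lt_floor_add_one (cq α n); linarith
  have : 1 < 1 / (cq α n - (⌊cq α n⌋ : ℝ)) := one_lt_one_div hf hlt
  simpa only [cq] using this

lemma aq_pos (hirr : Irrational α) (m : ℕ) (hm : 1 ≤ m) : 1 ≤ aq α m := by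
  cases m with
  | zero => omega
  | succ k =>
    have h := one_lt_cq α hirr k
    have : (1:ℤ) ≤ ⌊cq α (k + 1)⌋ := Int.le_floor.2 (by exact_mod_cast h.le)
    simp only [aq]
    omega

lemma qp_pos (hirr : Irrational α) : ∀ r, 1 ≤ qp α r
  | 0 => by simp [qp]
  | 1 => by simpa [qp] using aq_pos α hirr 1 le_rfl
  | n + 2 => by
    have h := qp_pos hirr n
    simp only [qp]
    omega

lemma qp_mono (hirr : Irrational α) : ∀ r, qp α r ≤ qp α (r + 1)
  | 0 => by simpa [qp] using aq_pos α hirr 1 le_rfl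
  | n + 1 => by
    have ha : 1 ≤ aq α (n + 2) := aq_pos α hirr (n + 2) (by omega)
    have h := Nat.le_mul_of_pos_left (qp α (n + 1)) ha
    show qp α (n+1) ≤ qp α (n+2)
    simp only [qp]
    omega

lemma qp_ge (hirr : Irrational α) : ∀ r, r ≤ qp α r
  | 0 => by omega
  | 1 => by simpa [qp] using aq_pos α hirr 1 le_rfl
  | n + 2 => by
    have h1 := qp_ge hirr (n + 1)
    have h0 := qp_pos α hirr n
    have ha : 1 ≤ aq α (n + 2) := aq_pos α hirr (n + 2) (by omega)
    have hm := Nat.le_mul_of_pos_left (qp α (n + 1)) ha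
    simp only [qp]
    omega

end Aux

/-- Properties of the canonical Ostrowski digits `b_r = ostDigit α N r` of `N ≥ 1`
(with `n = ostN α N`): `b_n ≥ 1`; `b_0 ≤ a_1 - 1` (in particular `b_0 = 0` if `q_1 = 1`);
`b_r ≤ a_{r+1}` for `1 ≤ r ≤ n`; and if `b_r = a_{r+1}` for some `1 ≤ r ≤ n`
then `b_{r-1} = 0`. -/
theorem stmt5 (α : ℝ) (hirr : Irrational α) (h0 : 0 < α) (h1 : α < 1)
    (N : ℕ) (hN : 1 ≤ N) :
    1 ≤ ostDigit α N (ostN α N) ∧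
    ostDigit α N 0 ≤ aq α 1 - 1 ∧
    (qp α 1 = 1 → ostDigit α N 0 = 0) ∧
    (∀ r : ℕ, 1 ≤ r → r ≤ ostN α N → ostDigit α N r ≤ aq α (r + 1)) ∧
    (∀ r : ℕ, 1 ≤ r → r ≤ ostN α N → ostDigit α N r = aq α (r + 1) →
      ostDigit α N (r - 1) = 0) := by
  set n := ostN α N with hn
  -- q_n ≤ N
  have hfg : Nat.findGreatest (fun r => qp α r ≤ N) N = n := hn.symm
  have hq_le : qp α n ≤ N := by
    have h0' : qp α 0 ≤ N := by simpa [qp] using hN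
    have := Nat.findGreatest_spec (P := fun r => qp α r ≤ N) (n := N) (Nat.zero_le N) h0'
    rwa [hfg] at this
  -- N < q_{n+1}
  have hlt : N < qp α (n + 1) := by
    by_cases h : n + 1 ≤ N
    · have := Nat.findGreatest_is_greatest (P := fun r => qp α r ≤ N) (n := N)
        (k := n + 1) (by omega) h
      omega
    · have h2 := qp_ge α hirr (n + 1)
      omega
  -- M bound
  have hM : ∀ k, k ≤ n → ostM α N k < qp α (n - k + 1) := by
    intro k
    induction k with
    | zero => intro _; simpa [ostM] using hlt
    | succ k ih =>
      intro hk
      have hpos : 1 ≤ qp α (n - k) := qp_pos α hirr _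
      have : ostM α N (k + 1) = ostM α N k % qp α (n - k) := by
        simp [ostM, hn]
      rw [this]
      have := Nat.mod_lt (ostM α N k) (by omega : 0 < qp α (n - k))
      have he : n - (k + 1) + 1 = n - k := by omega
      rw [he]; exact this
  have hMr : ∀ r, r ≤ n → ostM α N (n - r) < qp α (r + 1) := by
    intro r hr
    have := hM (n - r) (by omega)
    have he : n - (n - r) = r := by omega
    rwa [he] at this
  have hq1 : qp α 1 = aq α 1 := rfl
  refine ⟨?_, ?_, ?_, ?_, ?_⟩
  · -- 1 ≤ b_n
    have : ostDigit α N n = N / qp α n := by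
      simp [ostDigit, ostM, hn]
    rw [this]
    exact (Nat.one_le_div_iff (qp_pos α hirr n)).2 hq_le
  · -- b_0 ≤ a_1 - 1
    have h00 : ostDigit α N 0 = ostM α N n := by
      simp [ostDigit, qp, hn]
    have := hMr 0 (Nat.zero_le n)
    rw [Nat.sub_zero] at this
    rw [h00, hq1] at *
    omega
  · -- q_1 = 1 → b_0 = 0
    intro hq
    have h00 : ostDigit α N 0 = ostM α N n := by
      simp [ostDigit, qp, hn]
    have := hMr 0 (Nat.zero_le n)
    rw [Nat.sub_zero, hq] at this
    omega
  · -- b_r ≤ a_{r+1}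
    intro r hr1 hrn
    obtain ⟨m, rfl⟩ : ∃ m, r = m + 1 := ⟨r - 1, by omega⟩
    have hbig := hMr (m + 1) hrn
    have hqe : qp α (m + 2) = aq α (m + 2) * qp α (m + 1) + qp α m := rfl
    have hmono := qp_mono α hirr m
    have hpos := qp_pos α hirr (m + 1)
    have hdig : ostDigit α N (m + 1) = ostM α N (n - (m + 1)) / qp α (m + 1) := rfl
    rw [hdig]
    have hlt2 : ostM α N (n - (m + 1)) < (aq α (m + 2) + 1) * qp α (m + 1) := by
      rw [hqe] at hbig
      nlinarith [hbig, hmono]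
    have hfin := (Nat.div_lt_iff_lt_mul (by omega : 0 < qp α (m + 1))).2 hlt2
    show ostM α N (n - (m + 1)) / qp α (m + 1) ≤ aq α (m + 2)
    omega
  · -- b_r = a_{r+1} → b_{r-1} = 0
    intro r hr1 hrn hbr
    obtain ⟨m, rfl⟩ : ∃ m, r = m + 1 := ⟨r - 1, by omega⟩
    simp only [Nat.add_sub_cancel]
    -- M_{r-1} = M_r % q_r
    have hMstep : ostM α N (n - m) = ostM α N (n - (m + 1)) % qp α (m + 1) := by
      have he : n - m = (n - (m + 1)) + 1 := by omega
      have he2 : n - (n - (m + 1)) = m + 1 := by omega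
      rw [he]
      simp only [ostM, hn, he2]
      rw [← hn, he2]
    have hdig : ostDigit α N (m + 1) = ostM α N (n - (m + 1)) / qp α (m + 1) := rfl
    rw [hdig] at hbr
    have hbr2 : ostM α N (n - (m + 1)) / qp α (m + 1) = aq α (m + 2) := hbr
    have hmad := Nat.mod_add_div' (ostM α N (n - (m + 1))) (qp α (m + 1))
    rw [hbr2] at hmad
    have hbig := hMr (m + 1) hrn
    have hqe : qp α (m + 2) = aq α (m + 2) * qp α (m + 1) + qp α m := rfl
    rw [hqe] at hbig
    have hsmall : ostM α N (n - (m + 1)) % qp α (m + 1) < qp α m := by omega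
    have : ostDigit α N m = ostM α N (n - m) / qp α m := rfl
    rw [this, hMstep]
    exact Nat.div_eq_of_lt hsmall
end

section
/- Let α ∈ (0,1) be irrational of constant type. Then there exists a constant C such that for all integers N ≥ 1: |Σ_{r=1}^{N} (1/{r·α} − 1/(1 − {r·α}))| ≤ C·N, |Σ_{r=1}^{N} cot(π·r·α)| ≤ C·N, and |Σ_{r=1}^{N} 1/{{r·α}}| ≤ C·N. -/
open Finset

namespace CT

variable {α : ℝ}

theorem cq_irr (hirr : Irrational α) : ∀ n, Irrational (cq α n)
  | 0 => hirr
  | (n+1) => by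
    have h := cq_irr hirr n
    have h2 : Irrational (cq α n - (⌊cq α n⌋ : ℝ)) := h.sub_intCast _
    show Irrational (1 / (cq α n - (⌊cq α n⌋ : ℝ)))
    rw [one_div]
    exact h2.inv

theorem fract_pos_of_irr {x : ℝ} (h : Irrational x) : 0 < Int.fract x := by
  rcases lt_or_eq_of_le (Int.fract_nonneg x) with h' | h'
  · exact h'
  · exfalso
    have : Irrational (Int.fract x) := h.sub_intCast _
    exact this.ne_zero h'.symm

theorem cq_gt_one (hirr : Irrational α) (n : ℕ) : 1 < cq α (n + 1) := by
  have h := cq_irr hirr n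
  have hf0 : 0 < Int.fract (cq α n) := fract_pos_of_irr h
  have hf1 : Int.fract (cq α n) < 1 := Int.fract_lt_one _
  show 1 < 1 / (cq α n - (⌊cq α n⌋ : ℝ))
  rw [show cq α n - (⌊cq α n⌋ : ℝ) = Int.fract (cq α n) from rfl]
  rw [lt_div_iff₀ hf0]; linarith

theorem cq_pos (hirr : Irrational α) (h0 : 0 < α) : ∀ n, 0 < cq α n
  | 0 => h0
  | (n+1) => lt_trans one_pos (cq_gt_one hirr n)

theorem aq_cast (hirr : Irrational α) (n : ℕ) : ((aq α (n+1) : ℕ) : ℝ) = ((⌊cq α (n+1)⌋ : ℤ) : ℝ) := by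
  have h : (0:ℤ) ≤ ⌊cq α (n+1)⌋ := Int.le_floor.2 (by push_cast; linarith [cq_gt_one hirr n])
  rw [aq]
  have h2 := Int.toNat_of_nonneg h
  exact_mod_cast congrArg (fun z : ℤ => (z:ℝ)) h2

theorem aq_pos (hirr : Irrational α) (n : ℕ) : 1 ≤ aq α (n+1) := by
  have h := cq_gt_one hirr n
  have : (1:ℤ) ≤ ⌊cq α (n+1)⌋ := Int.le_floor.2 (by push_cast; linarith)
  rw [aq]; omega

theorem aq_le_cq (hirr : Irrational α) (n : ℕ) : ((aq α (n+1) : ℕ) : ℝ) ≤ cq α (n+1) := by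
  rw [aq_cast hirr]; exact Int.floor_le _

theorem cq_lt_aq_add_one (hirr : Irrational α) (n : ℕ) : cq α (n+1) < (aq α (n+1) : ℝ) + 1 := by
  rw [aq_cast hirr]; exact Int.lt_floor_add_one _

theorem cq_succ_eq (hirr : Irrational α) (n : ℕ) :
    cq α (n+2) = 1 / (cq α (n+1) - (aq α (n+1) : ℝ)) := by
  show (1 : ℝ) / (cq α (n+1) - (⌊cq α (n+1)⌋ : ℝ)) = _
  rw [aq_cast hirr]

theorem sub_aq_eq_inv_cq (hirr : Irrational α) (n : ℕ) :
    cq α (n+1) - (aq α (n+1) : ℝ) = 1 / cq α (n+2) := by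
  have h := cq_succ_eq hirr n
  have hf : cq α (n+1) - (aq α (n+1) : ℝ) = Int.fract (cq α (n+1)) := by
    rw [aq_cast hirr]; rfl
  have hf0 : 0 < Int.fract (cq α (n+1)) := fract_pos_of_irr (cq_irr hirr (n+1))
  rw [h, hf, one_div_one_div]

theorem floor_alpha (h0 : 0 < α) (h1 : α < 1) : ⌊α⌋ = 0 :=
  Int.floor_eq_zero_iff.2 ⟨h0.le, h1⟩

theorem cq_one (h0 : 0 < α) (h1 : α < 1) : cq α 1 = 1 / α := by
  show (1:ℝ) / (α - (⌊α⌋:ℝ)) = 1 / α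
  rw [floor_alpha h0 h1]; norm_num

noncomputable def et (α : ℝ) (n : ℕ) : ℝ := (qp α n : ℝ) * α - (pn α n : ℝ)

theorem et_zero : et α 0 = α := by simp [et, qp, pn]

theorem et_one : et α 1 = (aq α 1 : ℝ) * α - 1 := by simp [et, qp, pn]

theorem et_rec (n : ℕ) : et α (n+2) = (aq α (n+2) : ℝ) * et α (n+1) + et α n := by
  simp only [et, qp, pn]
  push_cast
  ring

theorem cq_mul_et (hirr : Irrational α) (h0 : 0 < α) (h1 : α < 1) :
    ∀ n, cq α (n+2) * et α (n+1) = - et α n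
  | 0 => by
    have ha : (aq α 1 : ℝ) = (⌊cq α 1⌋ : ℝ) := aq_cast hirr 0
    have hc1 : cq α 1 = 1 / α := cq_one h0 h1
    have hne : cq α 1 - (aq α 1 : ℝ) ≠ 0 := by
      rw [ha]
      have := fract_pos_of_irr (cq_irr hirr 1)
      show cq α 1 - ((⌊cq α 1⌋:ℤ):ℝ) ≠ 0
      have : (0:ℝ) < Int.fract (cq α 1) := this
      rw [Int.fract] at this; linarith
    have h2 : cq α 2 = 1 / (cq α 1 - (aq α 1 : ℝ)) := cq_succ_eq hirr 0
    rw [et_one, et_zero, h2, hc1]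
    have hα : α ≠ 0 := ne_of_gt h0
    rw [hc1] at hne
    rw [one_div, inv_mul_eq_div, div_eq_iff hne]
    rw [mul_sub, neg_mul, mul_one_div, div_self hα]
    ring
  | (n+1) => by
    have IH := cq_mul_et hirr h0 h1 n
    have hrec := et_rec (α := α) (n := n)
    have hinv := sub_aq_eq_inv_cq hirr (n+1)
    have hcq_pos : 0 < cq α (n+3) := cq_pos hirr h0 (n+3)
    have : et α (n+2) = (aq α (n+2) : ℝ) * et α (n+1) + et α n := et_rec n
    rw [this]
    have hen : et α n = - (cq α (n+2) * et α (n+1)) := by linarith [IH]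
    rw [hen]
    have hkey : (aq α (n+2) : ℝ) - cq α (n+2) = - (1 / cq α (n+3)) := by
      have := sub_aq_eq_inv_cq hirr (n+1)
      linarith
    have hne : cq α (n+3) ≠ 0 := ne_of_gt hcq_pos
    calc cq α (n+3) * ((aq α (n+2):ℝ) * et α (n+1) + -(cq α (n+2) * et α (n+1)))
        = cq α (n+3) * (((aq α (n+2):ℝ) - cq α (n+2)) * et α (n+1)) := by ring
      _ = cq α (n+3) * (-(1/cq α (n+3)) * et α (n+1)) := by rw [hkey]
      _ = - et α (n+1) := by field_simp

end CT


namespace CT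

variable {α : ℝ}

theorem et_ne (hirr : Irrational α) (h0 : 0 < α) (h1 : α < 1) : ∀ n, et α n ≠ 0
  | 0 => by rw [et_zero]; exact ne_of_gt h0
  | (n+1) => by
    have IH := et_ne hirr h0 h1 n
    have h := cq_mul_et hirr h0 h1 n
    intro hz; rw [hz, mul_zero] at h
    exact IH (by linarith)

theorem et_mul_neg (hirr : Irrational α) (h0 : 0 < α) (h1 : α < 1) (n : ℕ) :
    et α n * et α (n+1) < 0 := by
  have h := cq_mul_et hirr h0 h1 n
  have hc : 0 < cq α (n+2) := cq_pos hirr h0 (n+2)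
  have hne : et α n ≠ 0 := et_ne hirr h0 h1 n
  have hs : 0 < et α n ^ 2 := by positivity
  have h2 : cq α (n+2) * (et α n * et α (n+1)) = -(et α n ^ 2) := by
    linear_combination et α n * h
  nlinarith

theorem det_id : ∀ n, (pn α (n+1) : ℤ) * qp α n - (pn α n : ℤ) * qp α (n+1) = (-1)^n
  | 0 => by simp [pn, qp]
  | (n+1) => by
    have IH := det_id n
    show ((aq α (n+2) * pn α (n+1) + pn α n : ℕ) : ℤ) * (qp α (n+1) : ℤ)
        - (pn α (n+1) : ℤ) * ((aq α (n+2) * qp α (n+1) + qp α n : ℕ) : ℤ) = (-1)^(n+1)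
    push_cast
    linear_combination (-1 : ℤ) * IH

theorem qp_pos : ∀ n, 0 < qp α n → True := fun _ _ => trivial

theorem qp_one_le (hirr : Irrational α) : ∀ n, 1 ≤ qp α n
  | 0 => le_refl 1
  | 1 => aq_pos hirr 0
  | (n+2) => by
    have IH := qp_one_le hirr n
    show 1 ≤ aq α (n+2) * qp α (n+1) + qp α n
    omega

theorem qp_mono (hirr : Irrational α) : ∀ n, qp α n ≤ qp α (n+1)
  | 0 => aq_pos hirr 0
  | (n+1) => by
    have h1 := aq_pos hirr (n+1)
    have h2 := qp_one_le hirr (n+1)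
    show qp α (n+1) ≤ aq α (n+2) * qp α (n+1) + qp α n
    nlinarith

theorem qp_ge (hirr : Irrational α) : ∀ n, n ≤ qp α (n+1)
  | 0 => Nat.zero_le _
  | (n+1) => by
    have IH := qp_ge hirr n
    have h1 := aq_pos hirr (n+1)
    have h2 := qp_one_le hirr n
    show n+1 ≤ aq α (n+2) * qp α (n+1) + qp α n
    nlinarith

theorem qe_pos (hirr : Irrational α) (h0 : 0 < α) : ∀ n, 0 < qe α n
  | 0 => one_pos
  | 1 => cq_pos hirr h0 1
  | (n+2) => by
    have h1 : 0 < cq α (n+2) := cq_pos hirr h0 (n+2)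
    have h2 : 1 ≤ qp α n := qp_one_le hirr n
    have h3 : 1 ≤ qp α (n+1) := qp_one_le hirr (n+1)
    show 0 < cq α (n+2) * (qp α (n+1) : ℝ) + (qp α n : ℝ)
    have : (1:ℝ) ≤ (qp α n : ℝ) := by exact_mod_cast h2
    have : (1:ℝ) ≤ (qp α (n+1) : ℝ) := by exact_mod_cast h3
    nlinarith

theorem qp_le_qe (hirr : Irrational α) : ∀ n, (qp α (n+1) : ℝ) ≤ qe α (n+1)
  | 0 => aq_le_cq hirr 0
  | (n+1) => by
    have h1 := aq_le_cq hirr (n+1)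
    have h2 : (0:ℝ) ≤ (qp α (n+1) : ℝ) := by positivity
    show ((aq α (n+2) * qp α (n+1) + qp α n : ℕ) : ℝ) ≤ cq α (n+2) * (qp α (n+1) : ℝ) + (qp α n : ℝ)
    push_cast
    nlinarith

theorem qe_le (hirr : Irrational α) {A : ℕ} (hA : ∀ r, 1 ≤ r → aq α r ≤ A) :
    ∀ n, qe α (n+1) ≤ ((A:ℝ)+2) * (qp α n : ℝ)
  | 0 => by
    have h1 := cq_lt_aq_add_one hirr 0
    have h2 : aq α 1 ≤ A := hA 1 (le_refl 1)
    have h2' : ((aq α 1 : ℕ):ℝ) ≤ (A:ℝ) := by exact_mod_cast h2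
    show cq α 1 ≤ ((A:ℝ)+2) * ((1:ℕ):ℝ)
    push_cast
    linarith
  | (n+1) => by
    have h1 := cq_lt_aq_add_one hirr (n+1)
    have h2 : aq α (n+2) ≤ A := hA (n+2) (by omega)
    have h2' : ((aq α (n+2) : ℕ):ℝ) ≤ (A:ℝ) := by exact_mod_cast h2
    have h3 : (qp α n : ℝ) ≤ (qp α (n+1) : ℝ) := by exact_mod_cast qp_mono hirr n
    have h4 : (0:ℝ) < (qp α (n+1) : ℝ) := by
      have := qp_one_le hirr (n+1); exact_mod_cast Nat.lt_of_lt_of_le Nat.zero_lt_one this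
    show cq α (n+2) * (qp α (n+1) : ℝ) + (qp α n : ℝ) ≤ ((A:ℝ)+2) * (qp α (n+1) : ℝ)
    nlinarith

theorem qe_mul_et (hirr : Irrational α) (h0 : 0 < α) (h1 : α < 1) :
    ∀ n, qe α (n+1) * et α n = (-1:ℝ)^n
  | 0 => by
    show cq α 1 * et α 0 = 1
    rw [cq_one h0 h1, et_zero]
    field_simp
  | (m+1) => by
    have hcm := cq_mul_et hirr h0 h1 m
    have hdet := det_id (α := α) m
    have hdetR : ((pn α (m+1) : ℝ)) * (qp α m : ℝ) - (pn α m : ℝ) * (qp α (m+1) : ℝ) = (-1:ℝ)^m := by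
      exact_mod_cast congrArg (fun z : ℤ => (z:ℝ)) hdet
    show (cq α (m+2) * (qp α (m+1) : ℝ) + (qp α m : ℝ)) * et α (m+1) = (-1:ℝ)^(m+1)
    simp only [et] at hcm ⊢
    linear_combination (qp α (m+1) : ℝ) * hcm - hdetR

theorem abs_et (hirr : Irrational α) (h0 : 0 < α) (h1 : α < 1) (n : ℕ) :
    |et α n| = 1 / qe α (n+1) := by
  have h := qe_mul_et hirr h0 h1 n
  have hq : 0 < qe α (n+1) := qe_pos hirr h0 (n+1)
  have habs : |qe α (n+1) * et α n| = 1 := by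
    rw [h, abs_pow, abs_neg, abs_one, one_pow]
  rw [abs_mul, abs_of_pos hq] at habs
  field_simp at habs ⊢
  linarith [habs]

theorem abs_le_abs_add_of_mul_nonneg {a b : ℝ} (h : 0 ≤ a * b) : |a| ≤ |a + b| := by
  rcases mul_nonneg_iff.mp h with ⟨ha, hb⟩ | ⟨ha, hb⟩
  · rw [abs_of_nonneg ha, abs_of_nonneg (by linarith)]; linarith
  · rw [abs_of_nonpos ha, abs_of_nonpos (by linarith)]; linarith

theorem best_approx (hirr : Irrational α) (h0 : 0 < α) (h1 : α < 1)
    (n : ℕ) (r s : ℤ) (hr1 : 1 ≤ r) (hrq : r < (qp α (n+1) : ℤ)) :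
    |et α n| ≤ |(r:ℝ) * α - (s:ℝ)| := by
  set X : ℤ := (-1:ℤ)^n * (r * pn α (n+1) - s * qp α (n+1)) with hXdef
  set Y : ℤ := (-1:ℤ)^n * (s * qp α n - r * pn α n) with hYdef
  have hd := det_id (α := α) n
  have hε : ((-1:ℤ)^n) * ((-1:ℤ)^n) = 1 := by
    rw [← pow_add]; exact Even.neg_one_pow ⟨n, rfl⟩
  have hr_eq : X * (qp α n : ℤ) + Y * (qp α (n+1) : ℤ) = r := by
    rw [hXdef, hYdef]
    linear_combination ((-1:ℤ)^n * r) * hd + r * hε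
  have hq0 : (1:ℤ) ≤ (qp α n : ℤ) := by exact_mod_cast qp_one_le hirr n
  have hq1 : (1:ℤ) ≤ (qp α (n+1) : ℤ) := by exact_mod_cast qp_one_le hirr (n+1)
  have hdR : ((pn α (n+1) : ℝ)) * (qp α n : ℝ) - (pn α n : ℝ) * (qp α (n+1) : ℝ) = (-1:ℝ)^n := by
    exact_mod_cast congrArg (fun z : ℤ => (z:ℝ)) hd
  have hεR : ((-1:ℝ)^n) * ((-1:ℝ)^n) = 1 := by
    rw [← pow_add]; exact Even.neg_one_pow ⟨n, rfl⟩
  have key : (X:ℝ) * et α n + (Y:ℝ) * et α (n+1) = (r:ℝ)*α - (s:ℝ) := by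
    rw [hXdef, hYdef]
    simp only [et]
    push_cast
    linear_combination ((-1:ℝ)^n * ((r:ℝ)*α - s)) * hdR + ((r:ℝ)*α - s) * hεR
  have hXne : X ≠ 0 := by
    intro hX0
    rw [hX0, zero_mul, zero_add] at hr_eq
    rcases le_or_gt Y 0 with hY | hY
    · nlinarith
    · have hY1 : (1:ℤ) ≤ Y := hY
      nlinarith
  have hXY : X * Y ≤ 0 := by
    by_contra hpos
    push_neg at hpos
    rcases mul_pos_iff.mp hpos with ⟨hx, hy⟩ | ⟨hx, hy⟩
    · have hx1 : (1:ℤ) ≤ X := hx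
      have hy1 : (1:ℤ) ≤ Y := hy
      nlinarith
    · have hx1 : X ≤ -1 := by omega
      have hy1 : Y ≤ -1 := by omega
      nlinarith
  have hXYR : ((X:ℝ)) * ((Y:ℝ)) ≤ 0 := by exact_mod_cast hXY
  have hee : et α n * et α (n+1) ≤ 0 := (et_mul_neg hirr h0 h1 n).le
  have hsign : 0 ≤ ((X:ℝ) * et α n) * ((Y:ℝ) * et α (n+1)) := by nlinarith
  have habs1 : |(X:ℝ) * et α n| ≤ |(X:ℝ) * et α n + (Y:ℝ) * et α (n+1)| :=
    abs_le_abs_add_of_mul_nonneg hsign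
  rw [key, abs_mul] at habs1
  have hX1 : (1:ℝ) ≤ |(X:ℝ)| := by
    have := Int.one_le_abs hXne
    calc (1:ℝ) = ((1:ℤ):ℝ) := by norm_num
      _ ≤ ((|X|:ℤ):ℝ) := by exact_mod_cast this
      _ = |(X:ℝ)| := by push_cast; ring
  calc |et α n| = 1 * |et α n| := (one_mul _).symm
    _ ≤ |(X:ℝ)| * |et α n| := by
        have := abs_nonneg (et α n); nlinarith
    _ ≤ _ := habs1

end CT


namespace CT

theorem tele_sum : ∀ q : ℕ, ∑ i ∈ Finset.range q, (if i = 0 then (0:ℝ) else (1/(i:ℝ) - 1/((i:ℝ)+1)))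
    = if q = 0 then 0 else 1 - 1/(q:ℝ)
  | 0 => by simp
  | (q+1) => by
    rw [Finset.sum_range_succ, tele_sum q]
    rcases Nat.eq_zero_or_pos q with h | h
    · subst h; norm_num
    · have hq : (q:ℝ) ≠ 0 := by positivity
      have hq1 : q ≠ 0 := by omega
      simp only [if_neg hq1, if_neg (Nat.succ_ne_zero q)]
      have : q + 1 ≠ 0 := by omega
      push_cast
      ring

theorem round_eq_floor' {x : ℝ} (h : Int.fract x < 1/2) : (round x : ℝ) = (⌊x⌋ : ℝ) := by
  have hx : (⌊x⌋:ℝ) + Int.fract x = x := Int.floor_add_fract x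
  have h0 : 0 ≤ Int.fract x := Int.fract_nonneg x
  rw [round_eq]
  have hfl : ⌊x + 1/2⌋ = ⌊x⌋ := by
    apply Int.floor_eq_iff.2
    constructor
    · linarith
    · push_cast; linarith
  exact_mod_cast congrArg (fun z : ℤ => (z:ℝ)) hfl

theorem round_eq_floor_add_one {x : ℝ} (h : 1/2 ≤ Int.fract x) : (round x : ℝ) = (⌊x⌋ : ℝ) + 1 := by
  have hx : (⌊x⌋:ℝ) + Int.fract x = x := Int.floor_add_fract x
  have h1 : Int.fract x < 1 := Int.fract_lt_one x
  rw [round_eq]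
  have hfl : ⌊x + 1/2⌋ = ⌊x⌋ + 1 := by
    apply Int.floor_eq_iff.2
    constructor
    · push_cast; linarith
    · push_cast; linarith
  have := congrArg (fun z : ℤ => (z:ℝ)) hfl
  push_cast at this
  exact_mod_cast this

theorem block_bound (q : ℕ) (hq : 1 ≤ q) (K : ℝ) (hK : 1 ≤ K) (x : ℕ → ℝ)
    (hcell : ∀ i, i < q → (i:ℝ)/q < Int.fract (x i) ∧ Int.fract (x i) < ((i:ℝ)+1)/q)
    (hlow : ∀ i, i < q → 1/(K*q) ≤ |x i - (round (x i):ℝ)|) :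
    |∑ i ∈ Finset.range q, 1/(x i - (round (x i):ℝ))| ≤ (4*K+1) * q := by
  have hqR : (0:ℝ) < q := by exact_mod_cast hq
  set w : ℕ → ℝ := fun i => x i - (round (x i):ℝ) with hw
  set g : ℕ → ℝ := fun j => if j = 0 ∨ 2*j+1 = q then 2*K*q else (q:ℝ)/((j:ℝ)*((j:ℝ)+1)) with hg
  have hg_nonneg : ∀ j, 0 ≤ g j := by
    intro j
    rw [hg]
    dsimp only
    split
    · positivity
    · positivity
  -- each |1/w i| is at most K*q
  have hinv_le : ∀ i, i < q → |1/(w i)| ≤ K*q := by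
    intro i hi
    have h1 := hlow i hi
    have h2 : (0:ℝ) < 1/(K*q) := by positivity
    have h3 : 0 < |w i| := lt_of_lt_of_le h2 h1
    rw [abs_div, abs_one]
    rw [div_le_iff₀ h3]
    rw [div_le_iff₀ (by positivity : (0:ℝ) < K*q)] at h1
    linarith
  -- lower/upper identification of w
  have hwl : ∀ i, i < q → 2*(i+1) ≤ q → w i = Int.fract (x i) := by
    intro i hi h2i
    have hc := (hcell i hi).2
    have hhalf : ((i:ℝ)+1)/q ≤ 1/2 := by
      rw [div_le_div_iff₀ hqR (by norm_num : (0:ℝ) < 2)]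
      have : ((2*(i+1):ℕ):ℝ) ≤ (q:ℝ) := by exact_mod_cast h2i
      push_cast at this
      linarith
    have := round_eq_floor' (by linarith : Int.fract (x i) < 1/2)
    rw [hw]
    dsimp only
    rw [this]
    rfl
  have hwu : ∀ i, i < q → q ≤ 2*i → w i = Int.fract (x i) - 1 := by
    intro i hi h2i
    have hc := (hcell i hi).1
    have hhalf : 1/2 ≤ (i:ℝ)/q := by
      rw [div_le_div_iff₀ (by norm_num : (0:ℝ) < 2) hqR]
      have : (q:ℝ) ≤ ((2*i:ℕ):ℝ) := by exact_mod_cast h2i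
      push_cast at this
      linarith
    have := round_eq_floor_add_one (by linarith : 1/2 ≤ Int.fract (x i))
    rw [hw]
    dsimp only
    rw [this]
    have : Int.fract (x i) = x i - (⌊x i⌋:ℝ) := rfl
    linarith
  -- pair bound, lower case
  have hlowpair : ∀ i, i < q → 2*(i+1) ≤ q →
      |1/(w i) + 1/(w (q-1-i))| ≤ g i + g (q-1-i) := by
    intro i hi hil
    set i' := q-1-i with hi'
    have hi'q : i' < q := by omega
    have hui' : q ≤ 2*i' := by omega
    have hcast : ((i' : ℕ) : ℝ) = (q:ℝ) - 1 - (i:ℝ) := by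
      have hh : i' + (i + 1) = q := by omega
      have := congrArg (fun t : ℕ => (t:ℝ)) hh
      push_cast at this
      linarith
    have hw1 : w i = Int.fract (x i) := hwl i hi hil
    have hw2 : w i' = Int.fract (x i') - 1 := hwu i' hi'q hui'
    have hc1 := hcell i hi
    have hc2 := hcell i' hi'q
    -- w i ∈ (i/q, (i+1)/q),  w i' ∈ (-(i+1)/q, -i/q)
    have hwi_l : (i:ℝ)/q < w i := by rw [hw1]; exact hc1.1
    have hwi_u : w i < ((i:ℝ)+1)/q := by rw [hw1]; exact hc1.2
    have hwi'_l : -(((i:ℝ)+1)/q) < w i' := by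
      rw [hw2]
      have h' := hc2.1
      rw [hcast] at h'
      have hxx : ((q:ℝ) - 1 - i)/q = 1 - ((i:ℝ)+1)/q := by
        field_simp
        ring
      rw [hxx] at h'
      linarith
    have hwi'_u : w i' < -((i:ℝ)/q) := by
      rw [hw2]
      have h' := hc2.2
      rw [hcast] at h'
      have hxx : ((q:ℝ) - 1 - i + 1)/q = 1 - (i:ℝ)/q := by
        field_simp
        ring
      rw [hxx] at h'
      linarith
    rcases Nat.eq_zero_or_pos i with hi0 | hipos
    · -- i = 0 : crude bound
      subst hi0
      have b1 := hinv_le 0 hi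
      have b2 := hinv_le i' hi'q
      have hgi : g 0 = 2*K*q := by rw [hg]; exact if_pos (Or.inl rfl)
      calc |1/(w 0) + 1/(w i')| ≤ |1/(w 0)| + |1/(w i')| := abs_add_le _ _
        _ ≤ 2*K*q := by linarith
        _ = g 0 := hgi.symm
        _ ≤ g 0 + g i' := by linarith [hg_nonneg i']
    · -- 1 ≤ i : interval bound
      have hiR : (0:ℝ) < (i:ℝ) := by exact_mod_cast hipos
      have hiq : (0:ℝ) < (i:ℝ)/q := by positivity
      have hwipos : 0 < w i := lt_trans hiq hwi_l
      -- 1/w i ∈ (q/(i+1), q/i)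
      have hb1 : 1/(w i) < (q:ℝ)/i := by
        have := one_div_lt_one_div_of_lt hiq hwi_l
        rwa [one_div_div] at this
      have hb2 : (q:ℝ)/((i:ℝ)+1) < 1/(w i) := by
        have := one_div_lt_one_div_of_lt hwipos hwi_u
        rwa [one_div_div] at this
      -- 1/w i' ∈ (-q/i, -q/(i+1))
      have huneg : w i' < 0 := by
        have hn : -((i:ℝ)/q) ≤ 0 := neg_nonpos_of_nonneg hiq.le
        exact lt_of_lt_of_le hwi'_u hn
      set u : ℝ := -(w i') with hu
      have hu_l : (i:ℝ)/q < u := by rw [hu]; linarith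
      have hu_u : u < ((i:ℝ)+1)/q := by rw [hu]; linarith
      have hupos : 0 < u := lt_trans hiq hu_l
      have hb3 : 1/u < (q:ℝ)/i := by
        have := one_div_lt_one_div_of_lt hiq hu_l
        rwa [one_div_div] at this
      have hb4 : (q:ℝ)/((i:ℝ)+1) < 1/u := by
        have := one_div_lt_one_div_of_lt hupos hu_u
        rwa [one_div_div] at this
      have hwiu : 1/(w i') = -(1/u) := by
        rw [hu]
        rw [one_div, one_div, inv_neg, neg_neg]
      have habs : |1/(w i) + 1/(w i')| ≤ (q:ℝ)/i - (q:ℝ)/((i:ℝ)+1) := by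
        rw [hwiu]
        rw [abs_le]
        constructor <;> linarith
      have hgi : g i = (q:ℝ)/((i:ℝ)*((i:ℝ)+1)) := by
        rw [hg]
        have hcond : ¬(i = 0 ∨ 2*i+1 = q) := by omega
        exact if_neg hcond
      have heq : (q:ℝ)/i - (q:ℝ)/((i:ℝ)+1) = (q:ℝ)/((i:ℝ)*((i:ℝ)+1)) := by
        field_simp
        ring
      calc |1/(w i) + 1/(w i')| ≤ (q:ℝ)/i - (q:ℝ)/((i:ℝ)+1) := habs
        _ = g i := by rw [heq, hgi]
        _ ≤ g i + g i' := by linarith [hg_nonneg i']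
  -- general pair bound
  have hpair : ∀ i, i < q → |1/(w i) + 1/(w (q-1-i))| ≤ g i + g (q-1-i) := by
    intro i hi
    rcases le_or_gt (2*(i+1)) q with hcase | hcase
    · exact hlowpair i hi hcase
    rcases le_or_gt q (2*i) with hcase2 | hcase2
    · -- upper: apply lower to i' = q-1-i
      have h1 : q-1-i < q := by omega
      have h2 : 2*((q-1-i)+1) ≤ q := by omega
      have h3 : q-1-(q-1-i) = i := by omega
      have := hlowpair (q-1-i) h1 h2
      rw [h3] at this
      calc |1/(w i) + 1/(w (q-1-i))| = |1/(w (q-1-i)) + 1/(w i)| := by rw [add_comm]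
        _ ≤ g (q-1-i) + g i := this
        _ = g i + g (q-1-i) := by ring
    · -- middle: q = 2i+1, pair with itself
      have hqi : 2*i+1 = q := by omega
      have h3 : q-1-i = i := by omega
      rw [h3]
      have hb := hinv_le i hi
      have hgi : g i = 2*K*q := by rw [hg]; exact if_pos (Or.inr hqi)
      calc |1/(w i) + 1/(w i)| ≤ |1/(w i)| + |1/(w i)| := abs_add_le _ _
        _ ≤ 2*K*q := by linarith
        _ = g i := hgi.symm
        _ ≤ g i + g i := by linarith [hg_nonneg i]
  -- sum up
  have hrefl : ∑ i ∈ Finset.range q, 1/(w (q-1-i)) = ∑ i ∈ Finset.range q, 1/(w i) :=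
    Finset.sum_range_reflect (fun i => 1/(w i)) q
  have hgrefl : ∑ i ∈ Finset.range q, g (q-1-i) = ∑ i ∈ Finset.range q, g i :=
    Finset.sum_range_reflect g q
  set S := ∑ i ∈ Finset.range q, 1/(w i) with hS
  have hdouble : ∑ i ∈ Finset.range q, (1/(w i) + 1/(w (q-1-i))) = S + S := by
    rw [Finset.sum_add_distrib, hrefl]
  have h2S : 2 * |S| ≤ 2 * ∑ i ∈ Finset.range q, g i := by
    have habs2 : |S + S| ≤ ∑ i ∈ Finset.range q, (g i + g (q-1-i)) := by
      rw [← hdouble]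
      calc |∑ i ∈ Finset.range q, (1/(w i) + 1/(w (q-1-i)))|
          ≤ ∑ i ∈ Finset.range q, |1/(w i) + 1/(w (q-1-i))| := Finset.abs_sum_le_sum_abs _ _
        _ ≤ ∑ i ∈ Finset.range q, (g i + g (q-1-i)) := by
            apply Finset.sum_le_sum
            intro i hi
            exact hpair i (Finset.mem_range.mp hi)
    have : ∑ i ∈ Finset.range q, (g i + g (q-1-i)) = 2 * ∑ i ∈ Finset.range q, g i := by
      rw [Finset.sum_add_distrib, hgrefl]; ring
    rw [this] at habs2
    calc 2*|S| = |S + S| := by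
          have hSS : S + S = 2*S := by ring
          rw [hSS, abs_mul, abs_two]
      _ ≤ _ := habs2
  have hgle : ∀ i ∈ Finset.range q, g i ≤
      (if i = 0 then 2*K*q else 0) + (if i = q/2 then 2*K*q else 0)
      + (q:ℝ)*(if i = 0 then 0 else (1/(i:ℝ) - 1/((i:ℝ)+1))) := by
    intro i _
    have t1 : (0:ℝ) ≤ (if i = 0 then 2*K*q else 0) := by split_ifs <;> positivity
    have t2 : (0:ℝ) ≤ (if i = q/2 then 2*K*q else 0) := by split_ifs <;> positivity
    by_cases h0 : i = 0
    · subst h0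
      have hgi : g 0 = 2*K*q := by rw [hg]; exact if_pos (Or.inl rfl)
      rw [hgi, if_pos rfl, if_pos rfl]
      simp only [mul_zero]
      linarith
    · have hiR : (0:ℝ) < (i:ℝ) := by
        have : 0 < i := Nat.pos_of_ne_zero h0
        exact_mod_cast this
      have t3 : (0:ℝ) ≤ (q:ℝ)*(if i = 0 then 0 else (1/(i:ℝ) - 1/((i:ℝ)+1))) := by
        rw [if_neg h0]
        have : 1/((i:ℝ)+1) ≤ 1/(i:ℝ) := by
          apply one_div_le_one_div_of_le hiR
          linarith
        have hq0 : (0:ℝ) ≤ (q:ℝ) := hqR.le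
        nlinarith
      by_cases hm : 2*i+1 = q
      · have hiq2 : i = q/2 := by omega
        have hgi : g i = 2*K*q := by rw [hg]; exact if_pos (Or.inr hm)
        rw [hgi, if_neg h0, if_pos hiq2]
        linarith
      · have hgi : g i = (q:ℝ)/((i:ℝ)*((i:ℝ)+1)) := by
          rw [hg]
          exact if_neg (by omega)
        have heq : (q:ℝ)/((i:ℝ)*((i:ℝ)+1)) = (q:ℝ)*(1/(i:ℝ) - 1/((i:ℝ)+1)) := by
          field_simp
          ring
        rw [hgi, heq, if_neg h0, if_neg h0]
        linarith
  have hsumg : ∑ i ∈ Finset.range q, g i ≤ (4*K+1)*q := by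
    have hstep := Finset.sum_le_sum hgle
    rw [Finset.sum_add_distrib, Finset.sum_add_distrib] at hstep
    have e1 : ∑ i ∈ Finset.range q, (if i = 0 then 2*K*q else 0) = 2*K*q := by
      rw [Finset.sum_ite_eq' (Finset.range q) 0 (fun _ => 2*K*q)]
      rw [if_pos (Finset.mem_range.mpr (by omega))]
    have e2 : ∑ i ∈ Finset.range q, (if i = q/2 then 2*K*q else 0) = 2*K*q := by
      rw [Finset.sum_ite_eq' (Finset.range q) (q/2) (fun _ => 2*K*q)]
      rw [if_pos (Finset.mem_range.mpr (by omega))]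
    have e3 : ∑ i ∈ Finset.range q, (q:ℝ)*(if i = 0 then 0 else (1/(i:ℝ) - 1/((i:ℝ)+1)))
        ≤ (q:ℝ) := by
      rw [← Finset.mul_sum, tele_sum q, if_neg (by omega : ¬ q = 0)]
      have : (0:ℝ) < 1/(q:ℝ) := by positivity
      nlinarith
    rw [e1, e2] at hstep
    calc ∑ i ∈ Finset.range q, g i ≤ 2*K*q + 2*K*q + _ := hstep
      _ ≤ 2*K*q + 2*K*q + (q:ℝ) := by linarith [e3]
      _ = (4*K+1)*q := by ring
  have : |S| ≤ ∑ i ∈ Finset.range q, g i := by linarith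
  calc |S| ≤ (4*K+1)*q := le_trans this hsumg

end CT


namespace CT

variable {α : ℝ}

theorem block_transfer (q : ℕ) (hq : 1 ≤ q) (K : ℝ) (hK : 1 ≤ K) (s : Finset ℕ)
    (hcard : s.card = q) (y : ℕ → ℝ) (j : ℕ → ℕ)
    (hj : ∀ r ∈ s, j r < q)
    (hinj : ∀ r₁ ∈ s, ∀ r₂ ∈ s, j r₁ = j r₂ → r₁ = r₂)
    (hcell : ∀ r ∈ s, ((j r : ℝ))/q < Int.fract (y r) ∧ Int.fract (y r) < ((j r : ℝ)+1)/q)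
    (hlow : ∀ r ∈ s, 1/(K*q) ≤ |y r - (round (y r):ℝ)|) :
    |∑ r ∈ s, 1/(y r - (round (y r):ℝ))| ≤ (4*K+1)*q := by
  classical
  have himg : s.image j = Finset.range q := by
    apply Finset.eq_of_subset_of_card_le
    · intro i hi
      rcases Finset.mem_image.mp hi with ⟨r, hr, rfl⟩
      exact Finset.mem_range.mpr (hj r hr)
    · rw [Finset.card_image_of_injOn (fun r hr r' hr' => hinj r hr r' hr'), hcard,
        Finset.card_range]
  set ρ : ℕ → ℕ := fun i => if h : ∃ r, r ∈ s ∧ j r = i then h.choose else 0 with hρ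
  have hρ_mem : ∀ i ∈ Finset.range q, ρ i ∈ s ∧ j (ρ i) = i := by
    intro i hi
    have h2 : i ∈ s.image j := himg ▸ hi
    rcases Finset.mem_image.mp h2 with ⟨r, hr, hjr⟩
    have hex : ∃ r, r ∈ s ∧ j r = i := ⟨r, hr, hjr⟩
    rw [hρ]
    dsimp only
    rw [dif_pos hex]
    exact hex.choose_spec
  have hleft : ∀ r ∈ s, ρ (j r) = r := by
    intro r hr
    have hex : ∃ r', r' ∈ s ∧ j r' = j r := ⟨r, hr, rfl⟩
    have h1 : ρ (j r) ∈ s ∧ j (ρ (j r)) = j r := by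
      rw [hρ]; dsimp only; rw [dif_pos hex]; exact hex.choose_spec
    exact hinj _ h1.1 r hr h1.2
  have hsum : ∑ r ∈ s, 1/(y r - (round (y r):ℝ))
      = ∑ i ∈ Finset.range q, 1/(y (ρ i) - (round (y (ρ i)):ℝ)) := by
    apply Finset.sum_nbij' j ρ
    · intro a ha; exact Finset.mem_range.mpr (hj a ha)
    · intro i hi; exact (hρ_mem i hi).1
    · exact hleft
    · intro i hi; exact (hρ_mem i hi).2
    · intro a ha
      rw [hleft a ha]
  rw [hsum]
  apply block_bound q hq K hK
  · intro i hi
    have h1 := hρ_mem i (Finset.mem_range.mpr hi)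
    have h2 := hcell (ρ i) h1.1
    rw [h1.2] at h2
    exact h2
  · intro i hi
    have h1 := hρ_mem i (Finset.mem_range.mpr hi)
    exact hlow (ρ i) h1.1

theorem pq_coprime (hirr : Irrational α) (k : ℕ) : Nat.gcd (pn α k) (qp α k) = 1 := by
  have hd := det_id (α := α) k
  have hε : ((-1:ℤ)^k) * ((-1:ℤ)^k) = 1 := by
    rw [← pow_add]; exact Even.neg_one_pow ⟨k, rfl⟩
  have hco : IsCoprime ((pn α k : ℤ)) ((qp α k : ℤ)) := by
    refine ⟨-((-1:ℤ)^k) * (qp α (k+1) : ℤ), ((-1:ℤ)^k) * (pn α (k+1) : ℤ), ?_⟩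
    linear_combination ((-1:ℤ)^k) * hd + hε
  have := Int.isCoprime_iff_gcd_eq_one.mp hco
  rwa [Int.gcd_natCast_natCast] at this

theorem round_unique {x : ℝ} {n : ℤ} (h : |x - (n:ℝ)| < 1/2) : round x = n := by
  rw [round_eq]
  rw [abs_lt] at h
  apply Int.floor_eq_iff.2
  constructor
  · linarith [h.1]
  · push_cast; linarith [h.2]

theorem abs_sub_round_lt_half {x : ℝ} (hx : Irrational x) : |x - (round x : ℝ)| < 1/2 := by
  rcases lt_or_eq_of_le (abs_sub_round x) with h | h
  · exact h
  · exfalso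
    rcases abs_eq (by norm_num : (0:ℝ) ≤ 1/2) |>.mp h with h' | h'
    · exact (hx.sub_intCast (round x)).ne_rat (1/2 : ℚ) (by push_cast; linarith)
    · exact (hx.sub_intCast (round x)).ne_rat (-(1/2) : ℚ) (by push_cast; linarith)

theorem round_neg_irr {x : ℝ} (hx : Irrational x) : round (-x) = -round x := by
  apply round_unique
  have h := abs_sub_round_lt_half hx
  have : -x - ((-round x : ℤ):ℝ) = -(x - (round x:ℝ)) := by push_cast; ring
  rw [this, abs_neg]
  exact h

end CT


namespace CT

variable {α : ℝ}

theorem div_lt_div_same' {a b c : ℝ} (hc : 0 < c) (h : a < b) : a/c < b/c := by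
  rw [div_lt_div_iff₀ hc hc]
  nlinarith

theorem mod_inj (hirr : Irrational α) (k : ℕ) {r₁ r₂ : ℕ}
    (h₁₂ : r₁ * pn α k % qp α k = r₂ * pn α k % qp α k)
    (hle : r₁ ≤ r₂) (hwin : r₂ - r₁ < qp α k) : r₁ = r₂ := by
  have hcop : Nat.gcd (pn α k) (qp α k) = 1 := pq_coprime hirr k
  have hmod : r₁ * pn α k ≡ r₂ * pn α k [MOD qp α k] := h₁₂
  have hcop' : Nat.gcd (qp α k) (pn α k) = 1 := by rwa [Nat.gcd_comm]
  have hmod2 : r₁ ≡ r₂ [MOD qp α k] := Nat.ModEq.cancel_right_of_coprime hcop' hmod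
  have hdvd : qp α k ∣ r₂ - r₁ := (Nat.modEq_iff_dvd' hle).mp hmod2
  have := Nat.eq_zero_of_dvd_of_lt hdvd
  rcases Nat.eq_zero_or_pos (r₂ - r₁) with h | h
  · omega
  · exfalso; exact absurd hwin (not_lt.mpr (Nat.le_of_dvd h hdvd))

theorem block_apply (hirr : Irrational α) (h0 : 0 < α) (h1 : α < 1)
    {A : ℕ} (hA : ∀ r, 1 ≤ r → aq α r ≤ A) (k N : ℕ)
    (hqN : qp α k ≤ N) (hN : N < qp α (k+1)) :
    |∑ r ∈ Finset.Ioc (N - qp α k) N, 1/((r:ℝ)*α - (round ((r:ℝ)*α):ℝ))|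
      ≤ (4*((A:ℝ)+2)+1) * (qp α k : ℝ) := by
  have hq1 : 1 ≤ qp α k := qp_one_le hirr k
  have hqR : (0:ℝ) < (qp α k : ℝ) := by exact_mod_cast hq1
  have hA0 : (0:ℝ) ≤ (A:ℝ) := Nat.cast_nonneg A
  have hKR : (1:ℝ) ≤ (A:ℝ)+2 := by linarith
  have hθabs : |et α k| = 1/qe α (k+1) := abs_et hirr h0 h1 k
  have hqe_pos : 0 < qe α (k+1) := qe_pos hirr h0 (k+1)
  have hqe_le : qe α (k+1) ≤ ((A:ℝ)+2)*(qp α k : ℝ) := qe_le hirr hA k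
  have hqp_le : (qp α (k+1) : ℝ) ≤ qe α (k+1) := qp_le_qe hirr k
  have hcard : (Finset.Ioc (N - qp α k) N).card = qp α k := by rw [Nat.card_Ioc]; omega
  have hmem : ∀ r ∈ Finset.Ioc (N - qp α k) N, 1 ≤ r ∧ r ≤ N := by
    intro r hr
    obtain ⟨h1', h2'⟩ := Finset.mem_Ioc.mp hr
    exact ⟨by omega, h2'⟩
  have hlow_r : ∀ r ∈ Finset.Ioc (N - qp α k) N,
      1/((((A:ℝ)+2))*(qp α k:ℝ)) ≤ |(r:ℝ)*α - (round ((r:ℝ)*α):ℝ)| := by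
    intro r hr
    obtain ⟨hr1, hrN⟩ := hmem r hr
    have hba := best_approx hirr h0 h1 k (r:ℤ) (round ((r:ℝ)*α))
      (by exact_mod_cast hr1) (by exact_mod_cast lt_of_le_of_lt hrN hN)
    have hba' : |et α k| ≤ |(r:ℝ)*α - (round ((r:ℝ)*α):ℝ)| := by
      have hcast : (((r:ℤ)):ℝ) = (r:ℝ) := by push_cast; ring
      rwa [hcast] at hba
    calc 1/((((A:ℝ)+2))*(qp α k:ℝ)) ≤ 1/qe α (k+1) :=
          one_div_le_one_div_of_le hqe_pos hqe_le
      _ = |et α k| := hθabs.symm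
      _ ≤ _ := hba'
  have hrabs : ∀ r ∈ Finset.Ioc (N - qp α k) N, (r:ℝ)*|et α k| < 1 := by
    intro r hr
    obtain ⟨hr1, hrN⟩ := hmem r hr
    have h2 : (r:ℝ) < qe α (k+1) := by
      have c1 : (r:ℝ) ≤ (N:ℝ) := by exact_mod_cast hrN
      have c2 : (N:ℝ) < (qp α (k+1):ℝ) := by exact_mod_cast hN
      linarith
    rw [hθabs]
    rw [mul_one_div, div_lt_one hqe_pos]
    exact h2
  have hdec : ∀ r : ℕ, (r:ℝ)*α = ((r * pn α k / qp α k : ℕ):ℝ)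
      + (((r * pn α k % qp α k : ℕ):ℝ) + (r:ℝ)*et α k)/(qp α k:ℝ) := by
    intro r
    have hdm := Nat.div_add_mod (r * pn α k) (qp α k)
    have hdmR : (qp α k:ℝ) * ((r * pn α k / qp α k : ℕ):ℝ) + ((r * pn α k % qp α k : ℕ):ℝ)
        = (r:ℝ) * (pn α k:ℝ) := by exact_mod_cast hdm
    have het : et α k = (qp α k:ℝ)*α - (pn α k:ℝ) := rfl
    rw [het]
    field_simp
    linear_combination (-1:ℝ) * hdmR
  have hθne : et α k ≠ 0 := et_ne hirr h0 h1 k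
  have hmodlt : ∀ r : ℕ, r * pn α k % qp α k < qp α k := fun r => Nat.mod_lt _ (by omega)
  rcases hθne.lt_or_gt with hneg | hpos
  · -- negative case : use y r = -(r α)
    have hterm : ∀ r ∈ Finset.Ioc (N - qp α k) N,
        1/((r:ℝ)*α - (round ((r:ℝ)*α):ℝ))
          = -(1/(-((r:ℝ)*α) - (round (-((r:ℝ)*α)):ℝ))) := by
      intro r hr
      obtain ⟨hr1, hrN⟩ := hmem r hr
      have hirr_r : Irrational ((r:ℝ)*α) := hirr.natCast_mul (by omega)
      have hrnd := round_neg_irr hirr_r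
      have hh : -((r:ℝ)*α) - (round (-((r:ℝ)*α)):ℝ) = -((r:ℝ)*α - (round ((r:ℝ)*α):ℝ)) := by
        rw [hrnd]; push_cast; ring
      rw [hh, one_div, one_div, inv_neg, neg_neg]
    rw [Finset.sum_congr rfl hterm]
    rw [Finset.sum_neg_distrib, abs_neg]
    apply block_transfer (qp α k) hq1 ((A:ℝ)+2) hKR _ hcard
      (fun r => -((r:ℝ)*α)) (fun r => (qp α k - r * pn α k % qp α k) % qp α k)
    · intro r _
      exact Nat.mod_lt _ (by omega)
    · intro r₁ hr₁ r₂ hr₂ hj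
      obtain ⟨ha1, ha2⟩ := hmem r₁ hr₁
      obtain ⟨hb1, hb2⟩ := hmem r₂ hr₂
      obtain ⟨ha1', _⟩ := Finset.mem_Ioc.mp hr₁
      obtain ⟨hb1', _⟩ := Finset.mem_Ioc.mp hr₂
      have hi₁ := hmodlt r₁
      have hi₂ := hmodlt r₂
      have hmeq : ∀ i, i < qp α k → (qp α k - i) % qp α k = if i = 0 then 0 else qp α k - i := by
        intro i hi
        by_cases h : i = 0
        · subst h; simp
        · rw [if_neg h]
          exact Nat.mod_eq_of_lt (by omega)
      rw [hmeq _ hi₁, hmeq _ hi₂] at hj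
      have heq : r₁ * pn α k % qp α k = r₂ * pn α k % qp α k := by
        by_cases hc1 : r₁ * pn α k % qp α k = 0 <;> by_cases hc2 : r₂ * pn α k % qp α k = 0 <;>
          simp [hc1, hc2] at hj <;> omega
      rcases le_total r₁ r₂ with hle | hle
      · exact mod_inj hirr k heq hle (by omega)
      · exact (mod_inj hirr k heq.symm hle (by omega)).symm
    · intro r hr
      obtain ⟨hr1, hrN⟩ := hmem r hr
      have hu0 : 0 < (r:ℝ) * (-(et α k)) := by
        have : (0:ℝ) < (r:ℝ) := by exact_mod_cast (by omega : 0 < r)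
        nlinarith
      have hu1 : (r:ℝ) * (-(et α k)) < 1 := by
        have := hrabs r hr
        rwa [abs_of_neg hneg] at this
      have hiq := hmodlt r
      by_cases hi0 : r * pn α k % qp α k = 0
      · -- i = 0
        have hj0 : (qp α k - r * pn α k % qp α k) % qp α k = 0 := by
          rw [hi0, Nat.sub_zero, Nat.mod_self]
        have hyr : -((r:ℝ)*α) = ((-(r * pn α k / qp α k : ℕ) : ℤ):ℝ)
            + ((r:ℝ)*(-(et α k)))/(qp α k:ℝ) := by
          rw [hdec r, hi0]
          generalize r * pn α k / qp α k = dd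
          push_cast
          field_simp
          ring
        have hfr : Int.fract (-((r:ℝ)*α)) = ((r:ℝ)*(-(et α k)))/(qp α k:ℝ) := by
          rw [hyr, Int.fract_intCast_add]
          apply Int.fract_eq_self.mpr
          constructor
          · exact div_nonneg hu0.le hqR.le
          · rw [div_lt_one hqR]
            have hq1R : (1:ℝ) ≤ (qp α k:ℝ) := by exact_mod_cast hq1
            linarith
        rw [hj0, hfr]
        constructor
        · rw [Nat.cast_zero, zero_div]
          exact div_pos hu0 hqR
        · rw [Nat.cast_zero, zero_add]
          apply div_lt_div_same' hqR
          linarith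
      · -- i ≥ 1
        have hj1 : (qp α k - r * pn α k % qp α k) % qp α k = qp α k - r * pn α k % qp α k :=
          Nat.mod_eq_of_lt (by omega)
        have hcast : ((qp α k - r * pn α k % qp α k : ℕ):ℝ)
            = (qp α k:ℝ) - ((r * pn α k % qp α k : ℕ):ℝ) := by
          have hh : (qp α k - r * pn α k % qp α k) + (r * pn α k % qp α k) = qp α k := by omega
          have := congrArg (fun t : ℕ => (t:ℝ)) hh
          push_cast at this
          linarith
        have hyr : -((r:ℝ)*α) = ((-(r * pn α k / qp α k : ℕ) - 1 : ℤ):ℝ)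
            + (((qp α k - r * pn α k % qp α k : ℕ):ℝ) + (r:ℝ)*(-(et α k)))/(qp α k:ℝ) := by
          rw [hdec r, hcast]
          generalize r * pn α k / qp α k = dd
          push_cast
          field_simp
          ring
        have hilb : (1:ℝ) ≤ ((r * pn α k % qp α k : ℕ):ℝ) := by
          exact_mod_cast (by omega : 1 ≤ r * pn α k % qp α k)
        have hfr : Int.fract (-((r:ℝ)*α))
            = (((qp α k - r * pn α k % qp α k : ℕ):ℝ) + (r:ℝ)*(-(et α k)))/(qp α k:ℝ) := by
          rw [hyr, Int.fract_intCast_add]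
          apply Int.fract_eq_self.mpr
          constructor
          · apply div_nonneg _ hqR.le
            have hnn : (0:ℝ) ≤ ((qp α k - r * pn α k % qp α k : ℕ):ℝ) := Nat.cast_nonneg _
            linarith
          · rw [div_lt_one hqR, hcast]
            linarith
        rw [hj1, hfr]
        constructor
        · apply div_lt_div_same' hqR
          linarith
        · apply div_lt_div_same' hqR
          linarith
    · intro r hr
      obtain ⟨hr1, hrN⟩ := hmem r hr
      have hirr_r : Irrational ((r:ℝ)*α) := hirr.natCast_mul (by omega)
      have hrnd := round_neg_irr hirr_r
      have hh : -((r:ℝ)*α) - (round (-((r:ℝ)*α)):ℝ) = -((r:ℝ)*α - (round ((r:ℝ)*α):ℝ)) := by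
        rw [hrnd]; push_cast; ring
      rw [hh, abs_neg]
      exact hlow_r r hr
  · -- positive case
    apply block_transfer (qp α k) hq1 ((A:ℝ)+2) hKR _ hcard
      (fun r => (r:ℝ)*α) (fun r => r * pn α k % qp α k)
    · intro r _
      exact hmodlt r
    · intro r₁ hr₁ r₂ hr₂ hj
      obtain ⟨ha1', _⟩ := Finset.mem_Ioc.mp hr₁
      obtain ⟨hb1', hb2'⟩ := Finset.mem_Ioc.mp hr₂
      rcases le_total r₁ r₂ with hle | hle
      · exact mod_inj hirr k hj hle (by omega)
      · exact (mod_inj hirr k hj.symm hle (by omega)).symm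
    · intro r hr
      obtain ⟨hr1, hrN⟩ := hmem r hr
      have hu0 : 0 < (r:ℝ) * et α k := by
        have : (0:ℝ) < (r:ℝ) := by exact_mod_cast (by omega : 0 < r)
        nlinarith
      have hu1 : (r:ℝ) * et α k < 1 := by
        have := hrabs r hr
        rwa [abs_of_pos hpos] at this
      have hiq := hmodlt r
      have hiub : ((r * pn α k % qp α k : ℕ):ℝ) + 1 ≤ (qp α k:ℝ) := by
        exact_mod_cast (by omega : r * pn α k % qp α k + 1 ≤ qp α k)
      have hcast : ((r * pn α k / qp α k : ℕ):ℝ) = (((r * pn α k / qp α k : ℕ):ℤ):ℝ) :=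
        (Int.cast_natCast _).symm
      have hfr : Int.fract ((r:ℝ)*α)
          = (((r * pn α k % qp α k : ℕ):ℝ) + (r:ℝ)*et α k)/(qp α k:ℝ) := by
        rw [hdec r, hcast, Int.fract_intCast_add]
        apply Int.fract_eq_self.mpr
        constructor
        · apply div_nonneg _ hqR.le
          have hnn : (0:ℝ) ≤ ((r * pn α k % qp α k : ℕ):ℝ) := Nat.cast_nonneg _
          linarith
        · rw [div_lt_one hqR]
          linarith
      rw [hfr]
      constructor
      · apply div_lt_div_same' hqR
        linarith
      · apply div_lt_div_same' hqR
        linarith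
    · exact hlow_r

end CT


namespace CT

variable {α : ℝ}

theorem main3 (hirr : Irrational α) (h0 : 0 < α) (h1 : α < 1)
    {A : ℕ} (hA : ∀ r, 1 ≤ r → aq α r ≤ A) :
    ∀ N : ℕ, |∑ r ∈ Finset.Ioc 0 N, 1/((r:ℝ)*α - (round ((r:ℝ)*α):ℝ))|
      ≤ (4*((A:ℝ)+2)+1) * (N:ℝ) := by
  intro N
  induction N using Nat.strong_induction_on with
  | _ N IH =>
    rcases Nat.eq_zero_or_pos N with h | hNpos
    · subst h; simp
    have hP0 : qp α 0 ≤ N := hNpos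
    set k := Nat.findGreatest (fun r => qp α r ≤ N) (N+1) with hk
    have hqkN : qp α k ≤ N := by
      have := Nat.findGreatest_spec (P := fun r => qp α r ≤ N) (n := N+1) (m := 0)
        (Nat.zero_le _) hP0
      rwa [← hk] at this
    have hNk : N < qp α (k+1) := by
      rcases le_or_gt (k+1) (N+1) with hcase | hcase
      · by_contra hcon
        push_neg at hcon
        have hgr := Nat.findGreatest_is_greatest (P := fun r => qp α r ≤ N) (n := N+1)
          (k := k+1) (by rw [← hk]; omega) hcase
        exact hgr hcon
      · have h3 := qp_ge hirr k
        omega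
    have hq1 : 1 ≤ qp α k := qp_one_le hirr k
    have hsplit : (∑ r ∈ Finset.Ioc 0 (N - qp α k), 1/((r:ℝ)*α - (round ((r:ℝ)*α):ℝ)))
        + (∑ r ∈ Finset.Ioc (N - qp α k) N, 1/((r:ℝ)*α - (round ((r:ℝ)*α):ℝ)))
        = ∑ r ∈ Finset.Ioc 0 N, 1/((r:ℝ)*α - (round ((r:ℝ)*α):ℝ)) :=
      Finset.sum_Ioc_consecutive _ (Nat.zero_le _) (by omega)
    have hIH := IH (N - qp α k) (by omega)
    have hblock := block_apply hirr h0 h1 hA k N hqkN hNk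
    have hcastN : ((N - qp α k : ℕ):ℝ) = (N:ℝ) - (qp α k:ℝ) := by
      have hh : (N - qp α k) + qp α k = N := by omega
      have := congrArg (fun t : ℕ => (t:ℝ)) hh
      push_cast at this
      linarith
    rw [← hsplit]
    calc |(∑ r ∈ Finset.Ioc 0 (N - qp α k), 1/((r:ℝ)*α - (round ((r:ℝ)*α):ℝ)))
        + (∑ r ∈ Finset.Ioc (N - qp α k) N, 1/((r:ℝ)*α - (round ((r:ℝ)*α):ℝ)))|
        ≤ |∑ r ∈ Finset.Ioc 0 (N - qp α k), 1/((r:ℝ)*α - (round ((r:ℝ)*α):ℝ))|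
          + |∑ r ∈ Finset.Ioc (N - qp α k) N, 1/((r:ℝ)*α - (round ((r:ℝ)*α):ℝ))| := abs_add_le _ _
      _ ≤ (4*((A:ℝ)+2)+1) * ((N - qp α k : ℕ):ℝ) + (4*((A:ℝ)+2)+1) * (qp α k:ℝ) := by
          linarith
      _ = (4*((A:ℝ)+2)+1) * (N:ℝ) := by rw [hcastN]; ring

theorem cot_add_int_mul_pi (x : ℝ) (n : ℤ) : Real.cot (x + n * Real.pi) = Real.cot x := by
  rw [Real.cot_eq_cos_div_sin, Real.cot_eq_cos_div_sin,
    Real.cos_antiperiodic.add_int_mul_eq, Real.sin_antiperiodic.add_int_mul_eq]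
  rcases Int.units_eq_one_or n.negOnePow with h | h <;> rw [h]
  · norm_num
  · push_cast
    rw [neg_one_mul, neg_one_mul, neg_div_neg_eq]

theorem cot_neg' (x : ℝ) : Real.cot (-x) = -Real.cot x := by
  rw [Real.cot_eq_cos_div_sin, Real.cot_eq_cos_div_sin, Real.cos_neg, Real.sin_neg, div_neg]

theorem cot_bound {u : ℝ} (h0u : 0 < u) (hu : u ≤ Real.pi/2) : |Real.cot u - 1/u| ≤ 1 := by
  have hpi := Real.pi_gt_three
  have hsin : 0 < Real.sin u := Real.sin_pos_of_pos_of_lt_pi h0u (by linarith)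
  have hub : Real.cot u ≤ 1/u := by
    rcases lt_or_eq_of_le hu with h | h
    · have ht := Real.lt_tan h0u h
      rw [Real.tan_eq_sin_div_cos] at ht
      have hcos : 0 < Real.cos u := Real.cos_pos_of_mem_Ioo ⟨by linarith, h⟩
      rw [lt_div_iff₀ hcos] at ht
      rw [Real.cot_eq_cos_div_sin, div_le_div_iff₀ hsin h0u]
      nlinarith
    · rw [h, Real.cot_eq_cos_div_sin, Real.cos_pi_div_two, zero_div]
      positivity
  have hlb : 1/u - Real.cot u ≤ 1 := by
    rcases le_or_gt u 1 with h | h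
    · have hsinlb := Real.sin_gt_sub_cube h0u
      have hcoslb := Real.one_sub_sq_div_two_le_cos (x := u)
      have hsinub := Real.sin_le h0u.le
      rw [Real.cot_eq_cos_div_sin,
        div_sub_div _ _ (ne_of_gt h0u) (ne_of_gt hsin), div_le_one (by positivity)]
      nlinarith
    · have hcotnn : 0 ≤ Real.cot u := by
        rw [Real.cot_eq_cos_div_sin]
        apply div_nonneg _ hsin.le
        exact Real.cos_nonneg_of_mem_Icc ⟨by linarith, hu⟩
      have h2 : 1/u ≤ 1 := by rw [div_le_one h0u]; linarith
      linarith
  rw [abs_le]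
  constructor <;> linarith

theorem cot_approx {x : ℝ} (hx : Irrational x) :
    |Real.cot (Real.pi * x) - 1/(Real.pi*(x - (round x:ℝ)))| ≤ 1 := by
  have hpi := Real.pi_gt_three
  set t := x - (round x:ℝ) with htdef
  have ht2 : |t| < 1/2 := abs_sub_round_lt_half hx
  have htne : t ≠ 0 := by
    rw [htdef, sub_ne_zero]
    exact hx.ne_int (round x)
  have hper : Real.cot (Real.pi * x) = Real.cot (Real.pi * t) := by
    have hh : Real.pi * x = Real.pi * t + (round x) * Real.pi := by rw [htdef]; ring
    rw [hh, cot_add_int_mul_pi]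
  rw [hper]
  rcases htne.lt_or_gt with hneg | hpos
  · have h0u : 0 < Real.pi * (-t) := by
      apply mul_pos (by linarith)
      linarith
    have huu : Real.pi * (-t) ≤ Real.pi/2 := by
      have : -t ≤ 1/2 := by rw [abs_lt] at ht2; linarith
      nlinarith
    have hb := cot_bound h0u huu
    have he1 : Real.pi * (-t) = -(Real.pi * t) := by ring
    rw [he1, cot_neg'] at hb
    have he2 : 1/(-(Real.pi*t)) = -(1/(Real.pi*t)) := by
      rw [one_div, one_div, inv_neg]
    rw [he2] at hb
    have he3 : -Real.cot (Real.pi*t) - -(1/(Real.pi*t)) = -(Real.cot (Real.pi*t) - 1/(Real.pi*t)) := by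
      ring
    rw [he3, abs_neg] at hb
    exact hb
  · apply cot_bound (mul_pos (by linarith) hpos)
    have : t ≤ 1/2 := by rw [abs_lt] at ht2; linarith
    nlinarith

theorem frac_approx {x : ℝ} (hx : Irrational x) :
    |(1/Int.fract x - 1/(1 - Int.fract x)) - 1/(x - (round x:ℝ))| ≤ 2 := by
  have hf0 : 0 < Int.fract x := fract_pos_of_irr hx
  have hf1 : Int.fract x < 1 := Int.fract_lt_one x
  have hfirr : Irrational (Int.fract x) := hx.sub_intCast _
  have hfne : Int.fract x ≠ 1/2 := by
    intro h
    exact hfirr.ne_rat (1/2 : ℚ) (by rw [h]; norm_num)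
  rcases hfne.lt_or_gt with h | h
  · have hr := round_eq_floor' h
    have hxr : x - (round x:ℝ) = Int.fract x := by
      rw [hr]; rfl
    rw [hxr]
    have he : 1/Int.fract x - 1/(1 - Int.fract x) - 1/Int.fract x = -(1/(1-Int.fract x)) := by
      ring
    rw [he, abs_neg, abs_of_pos (one_div_pos.mpr (by linarith))]
    rw [div_le_iff₀ (by linarith)]
    linarith
  · have hr := round_eq_floor_add_one h.le
    have hxr : x - (round x:ℝ) = Int.fract x - 1 := by
      rw [hr]
      have hfr : Int.fract x = x - (⌊x⌋:ℝ) := rfl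
      linarith
    rw [hxr]
    have he : 1/(Int.fract x - 1) = -(1/(1 - Int.fract x)) := by
      rw [show Int.fract x - 1 = -(1-Int.fract x) by ring, one_div, one_div, inv_neg]
    rw [he]
    have he2 : 1/Int.fract x - 1/(1-Int.fract x) - (-(1/(1-Int.fract x))) = 1/Int.fract x := by
      ring
    rw [he2, abs_of_pos (one_div_pos.mpr hf0)]
    rw [div_le_iff₀ hf0]
    linarith

end CT


/-- For `α` irrational of constant type, the Birkhoff sums of `1/{x} − 1/(1−{x})`,
`cot(πx)` and `1/{{x}}` along the orbit `(rα)` are all `O(N)` with explicit constant. -/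
theorem stmt11 (α : ℝ) (hirr : Irrational α) (h0 : 0 < α) (h1 : α < 1)
    (hconst : ∃ A : ℕ, ∀ r : ℕ, 1 ≤ r → aq α r ≤ A) :
    ∃ C : ℝ, ∀ N : ℕ, 1 ≤ N →
      |∑ r ∈ Finset.Icc 1 N,
        (1 / Int.fract ((r : ℝ) * α) - 1 / (1 - Int.fract ((r : ℝ) * α)))| ≤ C * N ∧
      |∑ r ∈ Finset.Icc 1 N, Real.cot (Real.pi * (r : ℝ) * α)| ≤ C * N ∧
      |∑ r ∈ Finset.Icc 1 N,
        1 / ((r : ℝ) * α - (round ((r : ℝ) * α) : ℤ))| ≤ C * N := by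
  obtain ⟨A, hA⟩ := hconst
  refine ⟨4*((A:ℝ)+2)+3, ?_⟩
  intro N hN
  have hpi := Real.pi_gt_three
  have hC2 := CT.main3 hirr h0 h1 hA N
  have hIcc : Finset.Icc 1 N = Finset.Ioc 0 N := Finset.Icc_add_one_left_eq_Ioc 0 N
  have hNR : (1:ℝ) ≤ (N:ℝ) := by exact_mod_cast hN
  have hA0 : (0:ℝ) ≤ (A:ℝ) := Nat.cast_nonneg A
  have hirr_r : ∀ r ∈ Finset.Icc 1 N, Irrational ((r:ℝ)*α) := by
    intro r hr
    have := (Finset.mem_Icc.mp hr).1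
    exact hirr.natCast_mul (by omega)
  have hcard : (Finset.Icc 1 N).card = N := by rw [Nat.card_Icc]; omega
  have h3 : |∑ r ∈ Finset.Icc 1 N, 1/((r:ℝ)*α - (round ((r:ℝ)*α):ℝ))|
      ≤ (4*((A:ℝ)+2)+1) * N := by
    rw [hIcc]; exact hC2
  refine ⟨?_, ?_, ?_⟩
  · -- first sum
    have hsplit : ∑ r ∈ Finset.Icc 1 N,
        (1/Int.fract ((r:ℝ)*α) - 1/(1 - Int.fract ((r:ℝ)*α)))
        = (∑ r ∈ Finset.Icc 1 N, ((1/Int.fract ((r:ℝ)*α) - 1/(1 - Int.fract ((r:ℝ)*α)))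
            - 1/((r:ℝ)*α - (round ((r:ℝ)*α):ℝ))))
          + ∑ r ∈ Finset.Icc 1 N, 1/((r:ℝ)*α - (round ((r:ℝ)*α):ℝ)) := by
      rw [← Finset.sum_add_distrib]
      apply Finset.sum_congr rfl
      intro r _
      ring
    rw [hsplit]
    have hterm : |∑ r ∈ Finset.Icc 1 N, ((1/Int.fract ((r:ℝ)*α) - 1/(1 - Int.fract ((r:ℝ)*α)))
        - 1/((r:ℝ)*α - (round ((r:ℝ)*α):ℝ)))| ≤ 2*N := by
      calc |∑ r ∈ Finset.Icc 1 N, ((1/Int.fract ((r:ℝ)*α) - 1/(1 - Int.fract ((r:ℝ)*α)))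
            - 1/((r:ℝ)*α - (round ((r:ℝ)*α):ℝ)))|
          ≤ ∑ r ∈ Finset.Icc 1 N, |(1/Int.fract ((r:ℝ)*α) - 1/(1 - Int.fract ((r:ℝ)*α)))
            - 1/((r:ℝ)*α - (round ((r:ℝ)*α):ℝ))| := Finset.abs_sum_le_sum_abs _ _
        _ ≤ ∑ _r ∈ Finset.Icc 1 N, (2:ℝ) := by
            apply Finset.sum_le_sum
            intro r hr
            exact CT.frac_approx (hirr_r r hr)
        _ = 2*N := by rw [Finset.sum_const, hcard, nsmul_eq_mul]; ring
    calc |(∑ r ∈ Finset.Icc 1 N, ((1/Int.fract ((r:ℝ)*α) - 1/(1 - Int.fract ((r:ℝ)*α)))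
            - 1/((r:ℝ)*α - (round ((r:ℝ)*α):ℝ))))
          + ∑ r ∈ Finset.Icc 1 N, 1/((r:ℝ)*α - (round ((r:ℝ)*α):ℝ))|
        ≤ |∑ r ∈ Finset.Icc 1 N, ((1/Int.fract ((r:ℝ)*α) - 1/(1 - Int.fract ((r:ℝ)*α)))
            - 1/((r:ℝ)*α - (round ((r:ℝ)*α):ℝ)))|
          + |∑ r ∈ Finset.Icc 1 N, 1/((r:ℝ)*α - (round ((r:ℝ)*α):ℝ))| := abs_add_le _ _
      _ ≤ 2*N + (4*((A:ℝ)+2)+1) * N := by linarith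
      _ = (4*((A:ℝ)+2)+3) * N := by ring
  · -- cotangent sum
    have hsplit : ∑ r ∈ Finset.Icc 1 N, Real.cot (Real.pi * (r:ℝ) * α)
        = (∑ r ∈ Finset.Icc 1 N, (Real.cot (Real.pi * (r:ℝ) * α)
            - 1/(Real.pi * ((r:ℝ)*α - (round ((r:ℝ)*α):ℝ)))))
          + (1/Real.pi) * ∑ r ∈ Finset.Icc 1 N, 1/((r:ℝ)*α - (round ((r:ℝ)*α):ℝ)) := by
      rw [Finset.mul_sum, ← Finset.sum_add_distrib]
      apply Finset.sum_congr rfl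
      intro r _
      have he : (1/Real.pi) * (1/((r:ℝ)*α - (round ((r:ℝ)*α):ℝ)))
          = 1/(Real.pi * ((r:ℝ)*α - (round ((r:ℝ)*α):ℝ))) := by
        rw [div_mul_div_comm, one_mul]
      rw [he]
      ring
    rw [hsplit]
    have hterm : |∑ r ∈ Finset.Icc 1 N, (Real.cot (Real.pi * (r:ℝ) * α)
        - 1/(Real.pi * ((r:ℝ)*α - (round ((r:ℝ)*α):ℝ))))| ≤ N := by
      calc |∑ r ∈ Finset.Icc 1 N, (Real.cot (Real.pi * (r:ℝ) * α)
            - 1/(Real.pi * ((r:ℝ)*α - (round ((r:ℝ)*α):ℝ))))|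
          ≤ ∑ r ∈ Finset.Icc 1 N, |Real.cot (Real.pi * (r:ℝ) * α)
            - 1/(Real.pi * ((r:ℝ)*α - (round ((r:ℝ)*α):ℝ)))| := Finset.abs_sum_le_sum_abs _ _
        _ ≤ ∑ _r ∈ Finset.Icc 1 N, (1:ℝ) := by
            apply Finset.sum_le_sum
            intro r hr
            have := CT.cot_approx (hirr_r r hr)
            rwa [← mul_assoc] at this
        _ = N := by rw [Finset.sum_const, hcard, nsmul_eq_mul]; ring
    have hsecond : |(1/Real.pi) * ∑ r ∈ Finset.Icc 1 N, 1/((r:ℝ)*α - (round ((r:ℝ)*α):ℝ))|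
        ≤ (4*((A:ℝ)+2)+1) * N := by
      rw [abs_mul]
      have h1p : |1/Real.pi| ≤ 1 := by
        rw [abs_of_pos (by positivity)]
        rw [div_le_one (by linarith)]
        linarith
      have hS := h3
      have hnn : (0:ℝ) ≤ |∑ r ∈ Finset.Icc 1 N, 1/((r:ℝ)*α - (round ((r:ℝ)*α):ℝ))| :=
        abs_nonneg _
      nlinarith
    calc |(∑ r ∈ Finset.Icc 1 N, (Real.cot (Real.pi * (r:ℝ) * α)
            - 1/(Real.pi * ((r:ℝ)*α - (round ((r:ℝ)*α):ℝ)))))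
          + (1/Real.pi) * ∑ r ∈ Finset.Icc 1 N, 1/((r:ℝ)*α - (round ((r:ℝ)*α):ℝ))|
        ≤ |∑ r ∈ Finset.Icc 1 N, (Real.cot (Real.pi * (r:ℝ) * α)
            - 1/(Real.pi * ((r:ℝ)*α - (round ((r:ℝ)*α):ℝ))))|
          + |(1/Real.pi) * ∑ r ∈ Finset.Icc 1 N, 1/((r:ℝ)*α - (round ((r:ℝ)*α):ℝ))| :=
          abs_add_le _ _
      _ ≤ (N:ℝ) + (4*((A:ℝ)+2)+1) * N := by linarith
      _ ≤ (4*((A:ℝ)+2)+3) * N := by nlinarith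
  · -- third sum
    calc |∑ r ∈ Finset.Icc 1 N, 1/((r:ℝ)*α - (round ((r:ℝ)*α):ℝ))|
        ≤ (4*((A:ℝ)+2)+1) * N := h3
      _ ≤ (4*((A:ℝ)+2)+3) * N := by nlinarith
end
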